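/- Let G = (V,E) be a finite simple graph, let f be a quadruple Roman dominating function of G, and let v be a vertex with f(v) = 1 having three distinct neighbors u, w, y with f(u) = f(w) = f(y) = 2. Define g by g(v) = 0, g(y) = 3, and g(x) = f(x) for all other vertices x (so g(u) = g(w) = 2). Then g is a quadruple Roman dominating function of G with the same weight as f. -/

import Mathlib

/-!
Raising the value of `y` from `2` to `3` keeps `f` a 4RDF: a neighbour of `y` loses a
neighbour of value `2` but gains one of value `3`, which compensates in every clause.
Afterwards `v` has the neighbours `u`, `w` of value `2` and `y` of value `3`, so its value may
drop from `1` to `0`; no clause looks at neighbours of value below `2`, so no other vertex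
notices. The two moves change the weight by `+1` and `-1`.
-/

open Finset

/-- A quadruple Roman dominating function on a finite simple graph `G`:
`f : V → {0,1,2,3,4,5}` such that
* if `f v = 0` then `v` has a neighbor with value `5`, or two distinct neighbors `u, w`
  with `f u = 4` and `f w ≥ 2`, or at least two neighbors with value `≥ 3`, or at least
  four neighbors with value `2`, or two neighbors with value `2` and one with value `3`;
* if `f v = 1` then `v` has a neighbor with value `≥ 4`, or two distinct neighbors `u, w`
  with `f u = 3` and `f w ≥ 2`, or at least three neighbors with value `2`;
* if `f v = 2` then `v` has a neighbor with value `≥ 3` or at least two neighbors with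
  value `2`;
* if `f v = 3` then `v` has a neighbor with value `≥ 2`. -/
def Is4RDF {V : Type*} [Fintype V] (G : SimpleGraph V) [DecidableRel G.Adj]
    (f : V → ℕ) : Prop :=
  (∀ v, f v ≤ 5) ∧
  ∀ v : V,
    (f v = 0 →
      (∃ u, G.Adj v u ∧ f u = 5) ∨
      (∃ u w, u ≠ w ∧ G.Adj v u ∧ G.Adj v w ∧ f u = 4 ∧ 2 ≤ f w) ∨
      2 ≤ ((G.neighborFinset v).filter (fun u => 3 ≤ f u)).card ∨
      4 ≤ ((G.neighborFinset v).filter (fun u => f u = 2)).card ∨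
      (2 ≤ ((G.neighborFinset v).filter (fun u => f u = 2)).card ∧
        1 ≤ ((G.neighborFinset v).filter (fun u => f u = 3)).card)) ∧
    (f v = 1 →
      (∃ u, G.Adj v u ∧ 4 ≤ f u) ∨
      (∃ u w, u ≠ w ∧ G.Adj v u ∧ G.Adj v w ∧ f u = 3 ∧ 2 ≤ f w) ∨
      3 ≤ ((G.neighborFinset v).filter (fun u => f u = 2)).card) ∧
    (f v = 2 →
      (∃ u, G.Adj v u ∧ 3 ≤ f u) ∨
      2 ≤ ((G.neighborFinset v).filter (fun u => f u = 2)).card) ∧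
    (f v = 3 → ∃ u, G.Adj v u ∧ 2 ≤ f u)

/-- The quadruple Roman domination number: the minimum weight `∑ v, f v` over all
quadruple Roman dominating functions of `G`. -/
noncomputable def gamma4R {V : Type*} [Fintype V] (G : SimpleGraph V)
    [DecidableRel G.Adj] : ℕ :=
  sInf {n | ∃ f : V → ℕ, Is4RDF G f ∧ ∑ v, f v = n}

open Function

namespace Is4RDF

section Conditions

variable {V : Type*} [Fintype V] (G : SimpleGraph V) [DecidableRel G.Adj] (f : V → ℕ) (v : V)

def ZeroCond : Prop :=
  (∃ u, G.Adj v u ∧ f u = 5) ∨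
  (∃ u w, u ≠ w ∧ G.Adj v u ∧ G.Adj v w ∧ f u = 4 ∧ 2 ≤ f w) ∨
  2 ≤ ((G.neighborFinset v).filter (fun u => 3 ≤ f u)).card ∨
  4 ≤ ((G.neighborFinset v).filter (fun u => f u = 2)).card ∨
  (2 ≤ ((G.neighborFinset v).filter (fun u => f u = 2)).card ∧
    1 ≤ ((G.neighborFinset v).filter (fun u => f u = 3)).card)

def OneCond : Prop :=
  (∃ u, G.Adj v u ∧ 4 ≤ f u) ∨
  (∃ u w, u ≠ w ∧ G.Adj v u ∧ G.Adj v w ∧ f u = 3 ∧ 2 ≤ f w) ∨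
  3 ≤ ((G.neighborFinset v).filter (fun u => f u = 2)).card

def TwoCond : Prop :=
  (∃ u, G.Adj v u ∧ 3 ≤ f u) ∨ 2 ≤ ((G.neighborFinset v).filter (fun u => f u = 2)).card

def ThreeCond : Prop := ∃ u, G.Adj v u ∧ 2 ≤ f u

def At : Prop :=
  (f v = 0 → ZeroCond G f v) ∧ (f v = 1 → OneCond G f v) ∧
    (f v = 2 → TwoCond G f v) ∧ (f v = 3 → ThreeCond G f v)

theorem _root_.is4RDF_iff : Is4RDF G f ↔ (∀ v, f v ≤ 5) ∧ ∀ v, At G f v := Iff.rfl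

end Conditions

variable {V : Type*} [Fintype V] {G : SimpleGraph V} [DecidableRel G.Adj] {f f' : V → ℕ} {v : V}

theorem At.of_eq_zero (hv : f v = 0) (h : ZeroCond G f v) : At G f v :=
  ⟨fun _ => h, by omega, by omega, by omega⟩

theorem At.of_eq_three (hv : f v = 3) (h : ThreeCond G f v) : At G f v :=
  ⟨by omega, by omega, by omega, fun _ => h⟩

theorem zeroCond_of_two_two_three {u w y : V} (huw : u ≠ w) (hvu : G.Adj v u)
    (hvw : G.Adj v w) (hvy : G.Adj v y) (hu : f u = 2) (hw : f w = 2) (hy : f y = 3) :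
    ZeroCond G f v := by
  classical
  refine .inr <| .inr <| .inr <| .inr ⟨?_, card_pos.mpr ⟨y, by simp [hvy, hy]⟩⟩
  calc 2 = #{u, w} := (card_pair huw).symm
    _ ≤ _ := card_le_card <| by
      simp [insert_subset_iff, hvu, hvw, hu, hw]

theorem exists_adj_of_card_filter_pos {p : V → Prop} [DecidablePred p]
    (h : 0 < #((G.neighborFinset v).filter p)) : ∃ u, G.Adj v u ∧ p u := by
  obtain ⟨u, hu⟩ := card_pos.mp h
  rw [mem_filter, SimpleGraph.mem_neighborFinset] at hu
  exact ⟨u, hu⟩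

theorem TwoCond.threeCond (h : TwoCond G f v) : ThreeCond G f v := by
  rcases h with ⟨u, hu, h3⟩ | h2
  · exact ⟨u, hu, by omega⟩
  · obtain ⟨u, hu, h2⟩ := exists_adj_of_card_filter_pos (zero_lt_two.trans_le h2)
    exact ⟨u, hu, h2.ge⟩

section Mono

variable (hf' : ∀ u, G.Adj v u → 2 ≤ f u → f' u = f u)
include hf'

theorem filter_neighborFinset_subset {p : ℕ → Prop} [DecidablePred p] (hp : ∀ n, p n → 2 ≤ n) :
    (G.neighborFinset v).filter (fun u => p (f u)) ⊆
      (G.neighborFinset v).filter (fun u => p (f' u)) := by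
  intro u
  simp only [mem_filter, SimpleGraph.mem_neighborFinset]
  exact fun ⟨hu, hp'⟩ => ⟨hu, hf' u hu (hp _ hp') ▸ hp'⟩

theorem ZeroCond.mono : ZeroCond G f v → ZeroCond G f' v := by
  have hsub := fun (p : ℕ → Prop) [DecidablePred p] (hp : ∀ n, p n → 2 ≤ n) =>
    card_le_card (filter_neighborFinset_subset hf' hp)
  rintro (⟨u, hu, h5⟩ | ⟨u, w, huw, hu, hw, h4, h2⟩ | h3 | h2 | ⟨h2, h3⟩)
  · exact .inl ⟨u, hu, by rw [hf' u hu (by omega), h5]⟩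
  · exact .inr <| .inl ⟨u, w, huw, hu, hw, by rw [hf' u hu (by omega), h4],
      by rw [hf' w hw h2]; exact h2⟩
  · exact .inr <| .inr <| .inl <| h3.trans (hsub (3 ≤ ·) fun _ _ => by omega)
  · exact .inr <| .inr <| .inr <| .inl <| h2.trans (hsub (· = 2) fun _ _ => by omega)
  · exact .inr <| .inr <| .inr <| .inr ⟨h2.trans (hsub (· = 2) fun _ _ => by omega),
      h3.trans (hsub (· = 3) fun _ _ => by omega)⟩

theorem OneCond.mono : OneCond G f v → OneCond G f' v := by
  rintro (⟨u, hu, h4⟩ | ⟨u, w, huw, hu, hw, h3, h2⟩ | h2)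
  · exact .inl ⟨u, hu, by rw [hf' u hu (by omega)]; exact h4⟩
  · exact .inr <| .inl ⟨u, w, huw, hu, hw, by rw [hf' u hu (by omega), h3],
      by rw [hf' w hw h2]; exact h2⟩
  · exact .inr <| .inr <|
      h2.trans (card_le_card (filter_neighborFinset_subset hf' (p := (· = 2)) fun _ _ => by omega))

theorem TwoCond.mono : TwoCond G f v → TwoCond G f' v := by
  rintro (⟨u, hu, h3⟩ | h2)
  · exact .inl ⟨u, hu, by rw [hf' u hu (by omega)]; exact h3⟩
  · exact .inr <|
      h2.trans (card_le_card (filter_neighborFinset_subset hf' (p := (· = 2)) fun _ _ => by omega))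

omit [Fintype V] [DecidableRel G.Adj] in
theorem ThreeCond.mono : ThreeCond G f v → ThreeCond G f' v :=
  fun ⟨u, hu, h2⟩ => ⟨u, hu, by rw [hf' u hu h2]; exact h2⟩

theorem At.mono (hv : f' v = f v) : At G f v → At G f' v := fun ⟨h0, h1, h2, h3⟩ =>
  ⟨fun h => (h0 (hv ▸ h)).mono hf', fun h => (h1 (hv ▸ h)).mono hf',
    fun h => (h2 (hv ▸ h)).mono hf', fun h => (h3 (hv ▸ h)).mono hf'⟩

end Mono

section Update

variable [DecidableEq V] {y : V}

theorem filter_erase_subset_filter_update_three :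
    ((G.neighborFinset v).filter (f · = 2)).erase y ⊆
      (G.neighborFinset v).filter (update f y 3 · = 2) := by
  intro t
  simp only [mem_erase, mem_filter]
  exact fun ⟨hty, hv, h2⟩ => ⟨hv, by rw [update_of_ne hty]; exact h2⟩

theorem ZeroCond.update_three_of_adj (hy : f y = 2) (hvy : G.Adj v y) (h : ZeroCond G f v) :
    ZeroCond G (update f y 3) v := by
  have hyg : y ∈ (G.neighborFinset v).filter (fun t => update f y 3 t = 3) := by simp [hvy]
  suffices (∃ t, G.Adj v t ∧ 3 ≤ f t) ∨ 3 ≤ #((G.neighborFinset v).filter (f · = 2)) by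
    rcases this with ⟨t, ht, h3⟩ | h2
    · have hty : t ≠ y := by rintro rfl; omega
      refine .inr <| .inr <| .inl <| one_lt_card.mpr ⟨t, ?_, y, ?_, hty⟩
      · simpa [ht, update_of_ne hty] using h3
      · simpa using (mem_filter.mp hyg).1
    · refine .inr <| .inr <| .inr <| .inr ⟨?_, card_pos.mpr ⟨y, hyg⟩⟩
      calc 2 ≤ #((G.neighborFinset v).filter (f · = 2)) - 1 := by omega
        _ ≤ _ := pred_card_le_card_erase
        _ ≤ _ := card_le_card filter_erase_subset_filter_update_three
  rcases h with ⟨u, hu, h5⟩ | ⟨u, -, -, hu, -, h4, -⟩ | h3 | h2 | ⟨-, h3⟩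
  · exact .inl ⟨u, hu, by omega⟩
  · exact .inl ⟨u, hu, by omega⟩
  · exact .inl <| exists_adj_of_card_filter_pos (zero_lt_two.trans_le h3)
  · exact .inr (by omega)
  · obtain ⟨t, ht, h3⟩ := exists_adj_of_card_filter_pos h3
    exact .inl ⟨t, ht, h3.ge⟩

theorem OneCond.update_three_of_adj (hy : f y = 2) (hvy : G.Adj v y) (h : OneCond G f v) :
    OneCond G (update f y 3) v := by
  suffices ∃ t, G.Adj v t ∧ t ≠ y ∧ 2 ≤ f t by
    obtain ⟨t, ht, hty, h2⟩ := this
    exact .inr <| .inl ⟨y, t, hty.symm, hvy, ht, update_self .., by rwa [update_of_ne hty]⟩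
  rcases h with ⟨u, hu, h4⟩ | ⟨u, -, -, hu, -, h3, -⟩ | h2
  · exact ⟨u, hu, by rintro rfl; omega, by omega⟩
  · exact ⟨u, hu, by rintro rfl; omega, by omega⟩
  · obtain ⟨t, ht⟩ := card_pos.mp <| (by omega : 0 < _ - 1).trans_le
      (pred_card_le_card_erase (s := (G.neighborFinset v).filter (f · = 2)) (a := y))
    simp only [mem_erase, mem_filter, SimpleGraph.mem_neighborFinset] at ht
    exact ⟨t, ht.2.1, ht.1, ht.2.2.ge⟩

theorem update_three_of_eq_two (hf : Is4RDF G f) (hy : f y = 2) :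
    Is4RDF G (update f y 3) := by
  have hfv : ∀ z, At G f z := hf.2
  refine (is4RDF_iff _ _).mpr ⟨fun z => ?_, fun z => ?_⟩
  · rcases eq_or_ne z y with rfl | hzy
    · simp
    · simpa [hzy] using hf.1 z
  have hfix : ∀ t, G.Adj z t → ¬G.Adj z y → update f y 3 t = f t :=
    fun t hzt hzy => update_of_ne (by rintro rfl; exact hzy hzt) _ _
  rcases eq_or_ne z y with rfl | hzy
  · have h3 : ThreeCond G f z := TwoCond.threeCond ((hfv z).2.2.1 hy)
    exact At.of_eq_three (by simp) (h3.mono fun t ht _ => hfix t ht G.irrefl)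
  have hz : update f y 3 z = f z := update_of_ne hzy _ _
  by_cases hadj : G.Adj z y
  · exact ⟨fun h => ((hfv z).1 (hz ▸ h)).update_three_of_adj hy hadj,
      fun h => ((hfv z).2.1 (hz ▸ h)).update_three_of_adj hy hadj,
      fun _ => .inl ⟨y, hadj, by simp⟩, fun _ => ⟨y, hadj, by simp⟩⟩
  · exact (hfv z).mono (fun t ht _ => hfix t ht hadj) hz

theorem update_of_le_one {b : ℕ} (hf : Is4RDF G f) (hv : f v ≤ 1) (hb : b ≤ 5)
    (hvb : At G (update f v b) v) : Is4RDF G (update f v b) := by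
  refine (is4RDF_iff _ _).mpr ⟨fun z => ?_, fun z => ?_⟩
  · rcases eq_or_ne z v with rfl | hzv
    · simpa using hb
    · simpa [hzv] using hf.1 z
  rcases eq_or_ne z v with rfl | hzv
  · exact hvb
  · refine At.mono (f := f) (fun t _ ht => update_of_ne ?_ _ _) (update_of_ne hzv _ _) (hf.2 z)
    rintro rfl
    omega

end Update

end Is4RDF

theorem Finset.sum_update_add {ι M : Type*} [Fintype ι] [DecidableEq ι] [AddCommMonoid M]
    (f : ι → M) (i : ι) (b : M) : ∑ x, update f i b x + f i = ∑ x, f x + b := by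
  rw [sum_update_of_mem (mem_univ i), sum_eq_add_sum_sdiff_singleton_of_mem (mem_univ i)]
  abel

/-- If `f` is a 4RDF, `f v = 1`, and `v` has three distinct neighbors
`u, w, y` with `f u = f w = f y = 2`, then `g` with `g v = 0`, `g y = 3`, and `g = f`
elsewhere (so `g u = g w = 2`) is a 4RDF of the same weight. -/
theorem swap_one_three_twos_is_4RDF {V : Type*} [Fintype V] [DecidableEq V]
    (G : SimpleGraph V) [DecidableRel G.Adj] (f : V → ℕ) (hf : Is4RDF G f)
    (v u w y : V) (huw : u ≠ w) (huy : u ≠ y) (hwy : w ≠ y)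
    (hvu : G.Adj v u) (hvw : G.Adj v w) (hvy : G.Adj v y)
    (hv : f v = 1) (hu : f u = 2) (hw : f w = 2) (hy : f y = 2) :
    Is4RDF G (Function.update (Function.update f v 0) y 3) ∧
      ∑ x, Function.update (Function.update f v 0) y 3 x = ∑ x, f x := by
  have hvy' : v ≠ y := hvy.ne
  have hf' : Is4RDF G (update f y 3) := hf.update_three_of_eq_two hy
  rw [update_comm hvy']
  refine ⟨hf'.update_of_le_one (by simp [hvy', hv]) (by norm_num) (.of_eq_zero (by simp) ?_), ?_⟩
  · exact Is4RDF.zeroCond_of_two_two_three huw hvu hvw hvy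
      (by simp [hvu.ne', huy, hu]) (by simp [hvw.ne', hwy, hw]) (by simp [hvy'.symm])
  · have hvsum := sum_update_add (update f y 3) v 0
    have hysum := sum_update_add f y 3
    simp only [update_of_ne hvy', hv, hy] at hvsum hysum
    omega
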